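/- arXiv:1906.10733 — 6 statements merged into one kernel-verified Lean document; each statement's English description precedes it below -/
import Mathlib

section
/- Let P be a family of probability measures on a measurable space (Ω, F) that is dominated by a σ-finite measure ν. Then there exists a probability measure Q of the form Q = Σᵢ cᵢ P_{θᵢ}, where the cᵢ are nonnegative constants summing to 1 and each P_{θᵢ} ∈ P, such that every member of P is absolutely continuous with respect to Q. -/
open MeasureTheory
open scoped ENNReal

/-- Halmos–Savage lemma: a family of probability measures dominated by a σ-finite
measure admits a dominating probability measure of the form `Σᵢ cᵢ P_{θᵢ}`. -/
theorem halmos_savage {Ω Θ : Type*} [MeasurableSpace Ω] [Nonempty Θ]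
    (P : Θ → Measure Ω) [∀ θ, IsProbabilityMeasure (P θ)]
    (ν : Measure Ω) [SigmaFinite ν] (hdom : ∀ θ, P θ ≪ ν) :
    ∃ (θseq : ℕ → Θ) (c : ℕ → ℝ≥0∞),
      (∑' i, c i) = 1 ∧
      IsProbabilityMeasure (Measure.sum fun i => c i • P (θseq i)) ∧
      ∀ θ, P θ ≪ Measure.sum fun i => c i • P (θseq i) := by
  classical
  -- replace ν by an equivalent finite measure ν'
  obtain ⟨ν', hfin, hνν', hν'ν⟩ := exists_isFiniteMeasure_absolutelyContinuous ν
  -- supports of the densities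
  set f : Θ → Ω → ℝ≥0∞ := fun θ => (P θ).rnDeriv ν with hf
  set A : Θ → Set Ω := fun θ => {x | f θ x ≠ 0} with hA
  have hAmeas : ∀ θ, MeasurableSet (A θ) := fun θ =>
    ((Measure.measurable_rnDeriv _ _) (measurableSet_singleton 0)).compl
  have hPA : ∀ θ, P θ (A θ)ᶜ = 0 := by
    intro θ
    have h1 : P θ = ν.withDensity (f θ) := (Measure.withDensity_rnDeriv_eq _ _ (hdom θ)).symm
    rw [h1, withDensity_apply _ (hAmeas θ).compl]
    refine (setLIntegral_eq_zero_iff' (hAmeas θ).compl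
      (Measure.measurable_rnDeriv _ _).aemeasurable).2 ?_
    filter_upwards with x hx
    simpa [hA] using hx
  -- if `P θ E = 0` then `ν (E ∩ A θ) = 0`
  have hkey : ∀ θ (E : Set Ω), MeasurableSet E → P θ E = 0 → ν (E ∩ A θ) = 0 := by
    intro θ E hE hPE
    have h1 : P θ = ν.withDensity (f θ) := (Measure.withDensity_rnDeriv_eq _ _ (hdom θ)).symm
    rw [h1, withDensity_apply _ hE] at hPE
    have hae := (setLIntegral_eq_zero_iff' hE
      (Measure.measurable_rnDeriv _ _).aemeasurable).1 hPE
    rw [← nonpos_iff_eq_zero]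
    refine le_trans (measure_mono fun x hx => ?_) (ae_iff.1 hae).le
    simp only [Set.mem_setOf_eq, Classical.not_imp]
    exact ⟨hx.1, hx.2⟩
  -- the supremum of ν' over countable unions of supports
  set F : (ℕ → Θ) → ℝ≥0∞ := fun g => ν' (⋃ i, A (g i)) with hF
  have hne : (Set.range F).Nonempty := Set.range_nonempty F
  obtain ⟨u, hu_mono, hu_tend, hu_mem⟩ :=
    exists_seq_tendsto_sSup hne (OrderTop.bddAbove _)
  have hm : sSup (Set.range F) = ⨆ g, F g := by rw [sSup_range]
  choose g hg using fun n => hu_mem n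
  -- diagonal sequence
  let e : ℕ ≃ ℕ × ℕ := (Denumerable.eqv (ℕ × ℕ)).symm
  set θseq : ℕ → Θ := fun n => g (e n).1 ((e n).2) with hθseq
  set S : Set Ω := ⋃ n, A (θseq n) with hS
  have hSmeas : MeasurableSet S := MeasurableSet.iUnion fun n => hAmeas _
  have hSsup : ∀ (n : ℕ × ℕ), A (g n.1 n.2) ⊆ S := by
    intro n x hx
    exact Set.mem_iUnion.2 ⟨e.symm n, by simpa [hθseq, e.apply_symm_apply] using hx⟩
  have hν'S_ge : ∀ n, u n ≤ ν' S := by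
    intro n
    rw [← hg n]
    refine measure_mono (Set.iUnion_subset fun i => ?_)
    exact hSsup (n, i)
  have hν'S_le : ν' S ≤ sSup (Set.range F) := le_csSup (OrderTop.bddAbove _) ⟨θseq, rfl⟩
  have hν'S : ν' S = sSup (Set.range F) :=
    le_antisymm hν'S_le (le_of_tendsto' hu_tend hν'S_ge)
  -- maximality: for every θ, ν' (A θ \ S) = 0
  have hmax : ∀ θ, ν' (A θ \ S) = 0 := by
    intro θ
    set h : ℕ → Θ := fun n => Nat.casesOn n θ θseq with hh
    have hunion : (⋃ i, A (h i)) = A θ ∪ S := by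
      ext x
      simp only [Set.mem_iUnion, Set.mem_union, hS]
      constructor
      · rintro ⟨i, hi⟩
        cases i with
        | zero => exact Or.inl hi
        | succ n => exact Or.inr ⟨n, hi⟩
      · rintro (hx | ⟨n, hn⟩)
        · exact ⟨0, hx⟩
        · exact ⟨n + 1, hn⟩
    have hle : ν' (A θ ∪ S) ≤ ν' S := by
      rw [hν'S, ← hunion]
      exact le_csSup (OrderTop.bddAbove _) ⟨h, rfl⟩
    have hsplit : ν' (A θ ∪ S) = ν' S + ν' (A θ \ S) := by
      rw [← Set.diff_union_self (s := A θ) (t := S),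
        measure_union disjoint_sdiff_self_left hSmeas, add_comm]
    rw [hsplit] at hle
    have := ENNReal.le_of_add_le_add_left (measure_ne_top ν' S)
      (by simpa using hle : ν' S + ν' (A θ \ S) ≤ ν' S + 0)
    simpa using this
  have hmaxν : ∀ θ, ν (A θ \ S) = 0 := fun θ => hνν' (hmax θ)
  -- the coefficients
  refine ⟨θseq, fun i => 2⁻¹ ^ (i + 1), ?_, ?_, ?_⟩
  · -- sum = 1
    have : (∑' i : ℕ, (2 : ℝ≥0∞)⁻¹ ^ (i + 1)) = 2⁻¹ * ∑' i : ℕ, (2 : ℝ≥0∞)⁻¹ ^ i := by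
      rw [← ENNReal.tsum_mul_left]
      congr 1 with i
      ring
    rw [this, ENNReal.tsum_geometric]
    norm_num
    exact ENNReal.inv_mul_cancel (by norm_num) (by norm_num)
  · -- probability measure
    constructor
    rw [Measure.sum_apply _ MeasurableSet.univ]
    simp only [Measure.smul_apply, smul_eq_mul, measure_univ, mul_one]
    have : (∑' i : ℕ, (2 : ℝ≥0∞)⁻¹ ^ (i + 1)) = 2⁻¹ * ∑' i : ℕ, (2 : ℝ≥0∞)⁻¹ ^ i := by
      rw [← ENNReal.tsum_mul_left]
      congr 1 with i
      ring
    rw [this, ENNReal.tsum_geometric]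
    norm_num
    exact ENNReal.inv_mul_cancel (by norm_num) (by norm_num)
  · -- absolute continuity
    intro θ
    refine Measure.AbsolutelyContinuous.mk fun E hE hQE => ?_
    rw [Measure.sum_apply _ hE] at hQE
    have hterm : ∀ i, P (θseq i) E = 0 := by
      intro i
      have := ENNReal.tsum_eq_zero.1 hQE i
      simp only [Measure.smul_apply, smul_eq_mul] at this
      have h2 : ((2 : ℝ≥0∞)⁻¹ ^ (i + 1)) ≠ 0 := by
        simp [pow_ne_zero]
      exact (mul_eq_zero.1 this).resolve_left h2
    -- ν (E ∩ S) = 0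
    have hES : ν (E ∩ S) = 0 := by
      rw [hS, Set.inter_iUnion]
      exact measure_iUnion_null fun i => hkey (θseq i) E hE (hterm i)
    -- conclude
    have h1 : P θ (E ∩ S) = 0 := hdom θ hES
    have h2 : P θ (E \ S) = 0 := by
      rw [← nonpos_iff_eq_zero]
      have hsub : E \ S ⊆ (A θ \ S) ∪ (A θ)ᶜ := by
        intro x hx
        by_cases hxa : x ∈ A θ
        · exact Or.inl ⟨hxa, hx.2⟩
        · exact Or.inr hxa
      calc P θ (E \ S) ≤ P θ ((A θ \ S) ∪ (A θ)ᶜ) := measure_mono hsub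
        _ ≤ P θ (A θ \ S) + P θ (A θ)ᶜ := measure_union_le _ _
        _ = 0 := by rw [hdom θ (hmaxν θ), hPA θ, add_zero]
    rw [← nonpos_iff_eq_zero]
    calc P θ E ≤ P θ (E ∩ S) + P θ (E \ S) :=
          (measure_mono (by intro x hx; by_cases hxs : x ∈ S
                            · exact Or.inl ⟨hx, hxs⟩
                            · exact Or.inr ⟨hx, hxs⟩ : E ⊆ (E ∩ S) ∪ (E \ S))).trans
            (measure_union_le _ _)
      _ = 0 := by rw [h1, h2, add_zero]
end

section
/- Let P = {P_θ : θ ∈ Θ} be a family of probability measures on (Ω, F) such that the family Υ = {ν : ν is σ-finite and P_θ ≪ ν for all θ} is non-empty. Then there exists a minimal dominating measure λ for P, i.e. a measure λ ∈ Υ such that λ ≪ ν for every ν ∈ Υ. -/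
/-!
Replace the σ-finite dominating measure by an equivalent finite measure `μ`. Among the sets that
are null for every `P θ` choose, by exhaustion, one `N` of maximal `μ`-measure, and take
`λ = μ.restrict Nᶜ`. Every `P θ` is carried by `Nᶜ`, on which it is dominated by `μ`. A set that
is null for a dominating measure `ν` is null for every `P θ`, so adjoining it to `N` cannot
increase the `μ`-measure of `N`: it is `λ`-null.
-/

open MeasureTheory Set

namespace MeasureTheory

variable {α : Type*} [MeasurableSpace α]

theorem exists_mem_forall_measure_diff_eq_zero (μ : Measure α) [IsFiniteMeasure μ]
    {𝒩 : Set (Set α)} (h𝒩 : ∀ s ∈ 𝒩, MeasurableSet s)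
    (h𝒩_sUnion : ∀ S ⊆ 𝒩, S.Countable → ⋃₀ S ∈ 𝒩) :
    ∃ t ∈ 𝒩, ∀ s ∈ 𝒩, μ (s \ t) = 0 := by
  have h𝒩_empty : ∅ ∈ 𝒩 := by simpa using h𝒩_sUnion ∅ (empty_subset _) countable_empty
  obtain ⟨u, -, hu, hu𝒩⟩ :=
    exists_seq_tendsto_sSup ⟨μ ∅, mem_image_of_mem μ h𝒩_empty⟩ (OrderTop.bddAbove (μ '' 𝒩))
  choose s hs𝒩 hμs using hu𝒩
  set t := ⋃₀ range s
  have ht𝒩 : t ∈ 𝒩 := h𝒩_sUnion _ (range_subset_iff.2 hs𝒩) (countable_range s)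
  have hμt : μ t = sSup (μ '' 𝒩) := le_antisymm (le_sSup (mem_image_of_mem μ ht𝒩)) <|
    le_of_tendsto' hu fun n ↦ hμs n ▸ measure_mono (subset_sUnion_of_mem (mem_range_self n))
  refine ⟨t, ht𝒩, fun s' hs' ↦ ?_⟩
  have hpair : ⋃₀ {t, s'} ∈ 𝒩 :=
    h𝒩_sUnion _ (insert_subset ht𝒩 (singleton_subset_iff.2 hs')) (Set.to_countable _)
  have hle : μ t + μ (s' \ t) ≤ μ t + 0 :=
    calc μ t + μ (s' \ t) = μ (⋃₀ {t, s'}) := by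
          rw [sUnion_pair, ← union_sdiff_self, measure_union' disjoint_sdiff_right (h𝒩 t ht𝒩)]
      _ ≤ μ t + 0 := by rw [add_zero, hμt]; exact le_sSup (mem_image_of_mem μ hpair)
  exact le_antisymm ((ENNReal.add_le_add_iff_left (measure_ne_top μ t)).1 hle) zero_le

theorem Measure.AbsolutelyContinuous.restrict_compl_of_measure_eq_zero {μ ν : Measure α}
    (hνμ : ν ≪ μ) {N : Set α} (hN : ν N = 0) : ν ≪ μ.restrict Nᶜ := by
  have hνN : ν.restrict Nᶜ = ν := Measure.restrict_eq_self_of_ae_mem (compl_mem_ae_iff.2 hN)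
  exact hνN ▸ hνμ.restrict Nᶜ

theorem exists_isFiniteMeasure_minimal_dominating {ι : Type*} {P : ι → Measure α}
    (μ : Measure α) [IsFiniteMeasure μ] (hPμ : ∀ i, P i ≪ μ) :
    ∃ l : Measure α, IsFiniteMeasure l ∧ (∀ i, P i ≪ l) ∧
      ∀ ν : Measure α, (∀ i, P i ≪ ν) → l ≪ ν := by
  obtain ⟨N, ⟨-, hPN⟩, hN_max⟩ :=
    exists_mem_forall_measure_diff_eq_zero μ (𝒩 := {s | MeasurableSet s ∧ ∀ i, P i s = 0})
      (fun s hs ↦ hs.1) fun S hS𝒩 hS ↦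
        ⟨.sUnion hS fun s hs ↦ (hS𝒩 hs).1,
          fun i ↦ (measure_sUnion_null_iff hS).2 fun s hs ↦ (hS𝒩 hs).2 i⟩
  refine ⟨μ.restrict Nᶜ, inferInstance,
    fun i ↦ (hPμ i).restrict_compl_of_measure_eq_zero (hPN i), fun ν hPν ↦ ?_⟩
  refine Measure.AbsolutelyContinuous.mk fun A hA hνA ↦ ?_
  rw [Measure.restrict_apply hA, ← sdiff_eq]
  exact hN_max A ⟨hA, fun i ↦ hPν i hνA⟩

end MeasureTheory

theorem exists_minimal_dominating_measure_general {Ω Θ : Type*} [MeasurableSpace Ω]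
    (P : Θ → Measure Ω)
    (hΥ : ∃ ν : Measure Ω, SigmaFinite ν ∧ ∀ θ, P θ ≪ ν) :
    ∃ l : Measure Ω, (SigmaFinite l ∧ ∀ θ, P θ ≪ l) ∧
      ∀ ν : Measure Ω, SigmaFinite ν → (∀ θ, P θ ≪ ν) → l ≪ ν := by
  obtain ⟨ν₀, hν₀, hPν₀⟩ := hΥ
  obtain ⟨μ, hμ, hν₀μ, -⟩ := exists_isFiniteMeasure_absolutelyContinuous ν₀
  obtain ⟨l, hl, hPl, hl_min⟩ :=
    exists_isFiniteMeasure_minimal_dominating μ fun θ ↦ (hPν₀ θ).trans hν₀μ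
  exact ⟨l, ⟨inferInstance, hPl⟩, fun ν _ hPν ↦ hl_min ν hPν⟩

/-- If the family `Υ` of σ-finite measures dominating the family `P` is non-empty,
then there exists a minimal dominating measure `λ` for `P`: a member of `Υ` that is
absolutely continuous with respect to every member of `Υ`. -/
theorem exists_minimal_dominating_measure {Ω Θ : Type*} [MeasurableSpace Ω]
    (P : Θ → Measure Ω) [∀ θ, IsProbabilityMeasure (P θ)]
    (hΥ : ∃ ν : Measure Ω, SigmaFinite ν ∧ ∀ θ, P θ ≪ ν) :
    ∃ l : Measure Ω, (SigmaFinite l ∧ ∀ θ, P θ ≪ l) ∧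
      ∀ ν : Measure Ω, SigmaFinite ν → (∀ θ, P θ ≪ ν) → l ≪ ν :=
  exists_minimal_dominating_measure_general P hΥ
end

section
/- Let P = {P_θ : θ ∈ Θ} be a family of probability measures on (Ω, F) dominated by σ-finite measures ν₁ and ν₂, and let ν be a minimal dominating measure for P. Then there exist a measurable set A with P_θ(A) = 1 for all θ ∈ Θ, versions f_{1,θ} of dP_θ/dν₁ and f_{2,θ} of dP_θ/dν₂ for every θ, and a measurable function h : Ω → ℝ, such that f_{1,θ}(ω) = h(ω) f_{2,θ}(ω) for all θ ∈ Θ and all ω ∈ A. -/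
open MeasureTheory
open scoped ENNReal

/-- The Likelihood Proportionality Theorem: for a family of probability measures
dominated by σ-finite measures `ν₁` and `ν₂`, with `ν` a minimal dominating measure,
there exist a set `A` of full `P θ`-measure for all `θ`, versions `f₁ θ` of
`dP_θ/dν₁` and `f₂ θ` of `dP_θ/dν₂` (versions taken `ν`-a.e.), and a measurable
function `h` such that `f₁ θ ω = h ω * f₂ θ ω` for all `θ` and all `ω ∈ A`. -/
theorem likelihood_proportionality {Ω Θ : Type*} [MeasurableSpace Ω] [Nonempty Θ]
    (P : Θ → Measure Ω) [∀ θ, IsProbabilityMeasure (P θ)]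
    (ν₁ ν₂ ν : Measure Ω) [SigmaFinite ν₁] [SigmaFinite ν₂] [SigmaFinite ν]
    (hdom₁ : ∀ θ, P θ ≪ ν₁) (hdom₂ : ∀ θ, P θ ≪ ν₂)
    (hνdom : ∀ θ, P θ ≪ ν)
    (hνmin : ∀ μ : Measure Ω, SigmaFinite μ → (∀ θ, P θ ≪ μ) → ν ≪ μ) :
    ∃ (A : Set Ω) (f₁ f₂ : Θ → Ω → ℝ≥0∞) (h : Ω → ℝ≥0∞),
      MeasurableSet A ∧ (∀ θ, P θ A = 1) ∧
      (∀ θ, Measurable (f₁ θ) ∧ f₁ θ =ᵐ[ν] (P θ).rnDeriv ν₁) ∧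
      (∀ θ, Measurable (f₂ θ) ∧ f₂ θ =ᵐ[ν] (P θ).rnDeriv ν₂) ∧
      Measurable h ∧
      ∀ θ, ∀ ω ∈ A, f₁ θ ω = h ω * f₂ θ ω := by
  have hν₁ : ν ≪ ν₁ := hνmin ν₁ inferInstance hdom₁
  have hν₂ : ν ≪ ν₂ := hνmin ν₂ inferInstance hdom₂
  set r₁ := ν.rnDeriv ν₁ with hr₁
  set r₂ := ν.rnDeriv ν₂ with hr₂
  have hmr₁ : Measurable r₁ := Measure.measurable_rnDeriv ν ν₁
  have hmr₂ : Measurable r₂ := Measure.measurable_rnDeriv ν ν₂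
  have hA : MeasurableSet {ω | r₂ ω ≠ 0 ∧ r₂ ω ≠ ∞} := by
    exact ((hmr₂ (measurableSet_singleton 0)).compl.inter
      (hmr₂ (measurableSet_singleton ∞)).compl)
  refine ⟨{ω | r₂ ω ≠ 0 ∧ r₂ ω ≠ ∞},
    fun θ ω => (P θ).rnDeriv ν ω * r₁ ω,
    fun θ ω => (P θ).rnDeriv ν ω * r₂ ω,
    fun ω => r₁ ω / r₂ ω, ?_, ?_, ?_, ?_, ?_, ?_⟩
  · exact hA
  · intro θ
    have hpos : ∀ᵐ ω ∂ν, 0 < r₂ ω := Measure.rnDeriv_pos hν₂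
    have hlt : ∀ᵐ ω ∂ν, r₂ ω < ∞ := hν₂.ae_le (Measure.rnDeriv_lt_top ν ν₂)
    have hν : ∀ᵐ ω ∂ν, ω ∈ {ω | r₂ ω ≠ 0 ∧ r₂ ω ≠ ∞} := by
      filter_upwards [hpos, hlt] with ω h1 h2
      exact ⟨h1.ne', h2.ne⟩
    have hP : ∀ᵐ ω ∂(P θ), ω ∈ {ω | r₂ ω ≠ 0 ∧ r₂ ω ≠ ∞} := (hνdom θ).ae_le hν
    have := ae_iff.mp hP
    rw [← prob_compl_eq_zero_iff hA]
    simpa [Set.compl_setOf] using this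
  · intro θ
    exact ⟨(Measure.measurable_rnDeriv _ _).mul hmr₁,
      Measure.rnDeriv_mul_rnDeriv' hν₁⟩
  · intro θ
    exact ⟨(Measure.measurable_rnDeriv _ _).mul hmr₂,
      Measure.rnDeriv_mul_rnDeriv' hν₂⟩
  · exact hmr₁.div hmr₂
  · intro θ ω hω
    obtain ⟨h0, ht⟩ := hω
    show (P θ).rnDeriv ν ω * r₁ ω = (r₁ ω / r₂ ω) * ((P θ).rnDeriv ν ω * r₂ ω)
    rw [mul_comm ((P θ).rnDeriv ν ω) (r₂ ω), ← mul_assoc,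
      ENNReal.div_mul_cancel h0 ht, mul_comm]
end

section
/- Let P = {P_θ : θ ∈ Θ} be a family of probability measures on (Ω, F) dominated by σ-finite measures ν₁ and ν₂. Then there exists a measurable set A such that (i) P_θ(A) = 1 for all θ ∈ Θ, and (ii) the restrictions ν₁|_A and ν₂|_A to (A, F(A)) are equivalent measures, i.e. mutually absolutely continuous. -/
open MeasureTheory
open scoped ENNReal

/-- For a family of probability measures dominated by two σ-finite measures `ν₁`
and `ν₂`, there exists a measurable set `A` with `P θ A = 1` for every `θ` such
that the restrictions of `ν₁` and `ν₂` to `A` are mutually absolutely continuous. -/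
theorem exists_full_set_restrictions_equivalent {Ω Θ : Type*} [MeasurableSpace Ω]
    [Nonempty Θ]
    (P : Θ → Measure Ω) [∀ θ, IsProbabilityMeasure (P θ)]
    (ν₁ ν₂ : Measure Ω) [SigmaFinite ν₁] [SigmaFinite ν₂]
    (hdom₁ : ∀ θ, P θ ≪ ν₁) (hdom₂ : ∀ θ, P θ ≪ ν₂) :
    ∃ A : Set Ω, MeasurableSet A ∧ (∀ θ, P θ A = 1) ∧
      ν₁.restrict A ≪ ν₂.restrict A ∧ ν₂.restrict A ≪ ν₁.restrict A := by
  obtain ⟨s, hs, hs1, hs2⟩ := Measure.mutuallySingular_singularPart ν₁ ν₂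
  obtain ⟨t, ht, ht1, ht2⟩ := Measure.mutuallySingular_singularPart ν₂ ν₁
  refine ⟨s ∩ t, hs.inter ht, ?_, ?_, ?_⟩
  · intro θ
    have hc : P θ (s ∩ t)ᶜ = 0 := by
      rw [Set.compl_inter]
      refine measure_union_null ?_ ?_
      · exact hdom₂ θ hs2
      · exact hdom₁ θ ht2
    have := prob_compl_eq_zero_iff (μ := P θ) (hs.inter ht)
    exact this.mp hc
  · have hsing : (ν₁.singularPart ν₂).restrict (s ∩ t) = 0 := by
      rw [Measure.restrict_eq_zero]
      exact measure_mono_null Set.inter_subset_left hs1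
    calc ν₁.restrict (s ∩ t)
        = (ν₁.singularPart ν₂ + ν₂.withDensity (ν₁.rnDeriv ν₂)).restrict (s ∩ t) := by
          rw [← ν₁.haveLebesgueDecomposition_add ν₂]
      _ = (ν₂.withDensity (ν₁.rnDeriv ν₂)).restrict (s ∩ t) := by
          rw [Measure.restrict_add, hsing, zero_add]
      _ ≪ ν₂.restrict (s ∩ t) :=
          (withDensity_absolutelyContinuous ν₂ _).restrict _
  · have hsing : (ν₂.singularPart ν₁).restrict (s ∩ t) = 0 := by
      rw [Measure.restrict_eq_zero]
      exact measure_mono_null Set.inter_subset_right ht1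
    calc ν₂.restrict (s ∩ t)
        = (ν₂.singularPart ν₁ + ν₁.withDensity (ν₂.rnDeriv ν₁)).restrict (s ∩ t) := by
          rw [← ν₂.haveLebesgueDecomposition_add ν₁]
      _ = (ν₁.withDensity (ν₂.rnDeriv ν₁)).restrict (s ∩ t) := by
          rw [Measure.restrict_add, hsing, zero_add]
      _ ≪ ν₁.restrict (s ∩ t) :=
          (withDensity_absolutelyContinuous ν₁ _).restrict _
end

section
/- Let μ and ν be locally finite measures on a separable metric space Ω with μ ≪ ν. Any two versions of dμ/dν that are continuous on the support S_μ of μ coincide on S_μ. -/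
open MeasureTheory
open scoped ENNReal

/-- The support of a measure: the set of points all of whose open
neighbourhoods have positive measure. -/
def measureSupport {Ω : Type*} [TopologicalSpace Ω] [MeasurableSpace Ω]
    (ν : Measure Ω) : Set Ω :=
  {ω | ∀ U : Set Ω, IsOpen U → ω ∈ U → 0 < ν U}

open Filter Topology

lemma measureSupport_eq_support {X : Type*} [TopologicalSpace X] [MeasurableSpace X]
    (μ : Measure X) : measureSupport μ = μ.support := by
  ext x
  simp only [measureSupport, Measure.support_eq_forall_isOpen, Set.mem_ofPred_eq]
  exact forall_congr' fun _ => forall_comm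

namespace MeasureTheory.Measure

variable {X : Type*} [TopologicalSpace X] [MeasurableSpace X] [HereditarilyLindelofSpace X]
  {μ : Measure X}

-- The support is conull, so cutting a neighbourhood down to the support loses no measure.
lemma measure_pos_of_mem_nhdsWithin_support {x : X} (hx : x ∈ μ.support) {s : Set X}
    (hs : s ∈ 𝓝[μ.support] x) : 0 < μ s := by
  obtain ⟨U, hU, hxU, hUs⟩ := mem_nhdsWithin.mp hs
  have hUs_ae : U ≤ᵐ[μ] s := by
    filter_upwards [support_mem_ae] with y hy hyU using hUs ⟨hyU, hy⟩
  exact ((mem_support_iff_forall x).mp hx U (hU.mem_nhds hxU)).trans_le (measure_mono_ae hUs_ae)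

lemma eqOn_support_of_ae_eq {Y : Type*} [TopologicalSpace Y] [T2Space Y] {f g : X → Y}
    (hfg : f =ᵐ[μ] g) (hf : ContinuousOn f μ.support) (hg : ContinuousOn g μ.support) :
    Set.EqOn f g μ.support := by
  intro x hx
  by_contra hne
  have hne_nhds : {y | f y ≠ g y} ∈ 𝓝[μ.support] x :=
    (hf x hx).prodMk_nhds (hg x hx) (isClosed_diagonal.isOpen_compl.mem_nhds hne)
  exact (measure_pos_of_mem_nhdsWithin_support hx hne_nhds).ne' hfg

end MeasureTheory.Measure

theorem continuousOn_rnDeriv_unique_general {Ω : Type*} [MetricSpace Ω]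
    [TopologicalSpace.SeparableSpace Ω] [MeasurableSpace Ω]
    (μ ν : Measure Ω)
    (hac : μ ≪ ν)
    (f g : Ω → ℝ≥0∞)
    (hf : ContinuousOn f (measureSupport μ)) (hg : ContinuousOn g (measureSupport μ))
    (hfv : f =ᵐ[ν] μ.rnDeriv ν) (hgv : g =ᵐ[ν] μ.rnDeriv ν) :
    Set.EqOn f g (measureSupport μ) := by
  have := UniformSpace.secondCountable_of_separable Ω
  rw [measureSupport_eq_support] at hf hg ⊢
  exact Measure.eqOn_support_of_ae_eq (hac.ae_eq (hfv.trans hgv.symm)) hf hg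

/-- For locally finite measures `μ ≪ ν` on a separable metric space, any two
versions of `dμ/dν` that are continuous on the support of `μ` coincide there. -/
theorem continuousOn_rnDeriv_unique {Ω : Type*} [MetricSpace Ω]
    [TopologicalSpace.SeparableSpace Ω] [MeasurableSpace Ω] [BorelSpace Ω]
    (μ ν : Measure Ω) [IsLocallyFiniteMeasure μ] [IsLocallyFiniteMeasure ν]
    (hac : μ ≪ ν)
    (f g : Ω → ℝ≥0∞)
    (hf : ContinuousOn f (measureSupport μ)) (hg : ContinuousOn g (measureSupport μ))
    (hfv : f =ᵐ[ν] μ.rnDeriv ν) (hgv : g =ᵐ[ν] μ.rnDeriv ν) :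
    Set.EqOn f g (measureSupport μ) :=
  continuousOn_rnDeriv_unique_general μ ν hac f g hf hg hfv hgv
end

section
/- Being an exponential family is a property of the model and not of the dominating measure: if P = {P_θ} is an exponential family with respect to some σ-finite ν, with structure functions η, T, ξ, then for every σ-finite measure μ dominating P there exists a nonnegative measurable function h_μ such that dP_θ/dμ(ω) = exp{η(θ)ᵀ T(ω) − ξ(θ)} h_μ(ω) μ-a.e., with the same η, T and ξ. -/
open MeasureTheory
open scoped ENNReal

/-- Being an exponential family does not depend on the dominating measure: if
`P` is an exponential family with respect to `ν`, with structure functions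
`η`, `T`, `ξ`, then for every σ-finite measure `μ` dominating `P` there is a
nonnegative measurable function `h_μ` with
`dP_θ/dμ(ω) = exp(η(θ)ᵀ T(ω) − ξ(θ)) h_μ(ω)` `μ`-a.e., for the same `η`, `T`, `ξ`. -/
theorem exponential_family_independent_of_dominating {Ω Θ : Type*}
    [MeasurableSpace Ω]
    (P : Θ → Measure Ω) [∀ θ, IsProbabilityMeasure (P θ)]
    (ν : Measure Ω) [SigmaFinite ν] {p : ℕ}
    (T : Ω → Fin p → ℝ) (hT : Measurable T)
    (η : Θ → Fin p → ℝ) (ξ : Θ → ℝ)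
    (h : Ω → ℝ) (hh : Measurable h) (hh0 : ∀ ω, 0 ≤ h ω)
    (hexp : ∀ θ, P θ = ν.withDensity fun ω =>
      ENNReal.ofReal (Real.exp ((∑ i, η θ i * T ω i) - ξ θ) * h ω))
    (μ : Measure Ω) [SigmaFinite μ] (hμdom : ∀ θ, P θ ≪ μ) :
    ∃ hμ : Ω → ℝ≥0∞, Measurable hμ ∧
      ∀ θ, (P θ).rnDeriv μ =ᵐ[μ] fun ω =>
        ENNReal.ofReal (Real.exp ((∑ i, η θ i * T ω i) - ξ θ)) * hμ ω := by
  cases isEmpty_or_nonempty Θ with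
  | inl hΘ =>
    exact ⟨0, measurable_const, fun θ => (hΘ.false θ).elim⟩
  | inr hΘ =>
    set e : Θ → Ω → ℝ≥0∞ :=
      fun θ ω => ENNReal.ofReal (Real.exp ((∑ i, η θ i * T ω i) - ξ θ)) with he
    have hemeas : ∀ θ, Measurable (e θ) := by
      intro θ
      apply Measurable.ennreal_ofReal
      exact (Real.measurable_exp.comp
        ((Finset.measurable_sum _ fun i _ =>
          (measurable_const.mul ((measurable_pi_apply i).comp hT))).sub measurable_const))
    set ν' : Measure Ω := ν.withDensity fun ω => ENNReal.ofReal (h ω) with hν'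
    have hP : ∀ θ, P θ = ν'.withDensity (e θ) := by
      intro θ
      rw [hexp θ, hν', ← withDensity_mul _ (hh.ennreal_ofReal) (hemeas θ)]
      congr 1
      funext ω
      simp only [Pi.mul_apply, he]
      rw [ENNReal.ofReal_mul (Real.exp_nonneg _), mul_comm]
    haveI : SigmaFinite ν' := SigmaFinite.withDensity_ofReal _
    obtain ⟨θ₀⟩ := hΘ
    have hν'μ : ν' ≪ μ := by
      refine (Measure.AbsolutelyContinuous.trans ?_ (hμdom θ₀))
      rw [hP θ₀]
      exact withDensity_absolutelyContinuous' (hemeas θ₀).aemeasurable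
        (Filter.Eventually.of_forall fun ω => by simp [he, Real.exp_pos])
    refine ⟨ν'.rnDeriv μ, Measure.measurable_rnDeriv _ _, fun θ => ?_⟩
    rw [hP θ]
    exact Measure.rnDeriv_withDensity_left (hemeas θ).aemeasurable
      (Filter.Eventually.of_forall fun ω => ENNReal.ofReal_ne_top)
end
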